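/- Suppose Assumptions (A1)–(A6) hold. Under a good run, for every step t with 0 ≤ t ≤ 1/(√n p α) − 2, the sigmoid derivatives stay close to 1/2: max_{i∈[n]} |g_i^{(t)} − 1/2| ≤ 2/n^{3/2}, where g_i^{(t)} = −ℓ'(y_i f(x_i; W^{(t)})) and ℓ(z) = log(1 + e^{−z}). -/

import Mathlib

open MeasureTheory ProbabilityTheory BigOperators Filter
open scoped ENNReal NNReal

noncomputable section

namespace XOR

attribute [local instance] Classical.propDecidable

/-! ### Vectors, the network, and gradient descent -/

/-- Euclidean dot product on `Fin p → ℝ`. -/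
def dot {p : ℕ} (x y : Fin p → ℝ) : ℝ := ∑ k, x k * y k

/-- Euclidean norm. -/
def nrm {p : ℕ} (x : Fin p → ℝ) : ℝ := Real.sqrt (dot x x)

/-- The ReLU activation. -/
def relu (z : ℝ) : ℝ := max z 0

/-- (A choice of) the derivative of the ReLU. -/
def reluD (z : ℝ) : ℝ := if 0 < z then 1 else 0

/-- The two-layer ReLU network `f(x; W) = ∑ j, a j * φ(⟨w_j, x⟩)`. -/
def nnet {p m : ℕ} (a : Fin m → ℝ) (W : Fin m → Fin p → ℝ) (x : Fin p → ℝ) : ℝ :=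
  ∑ j, a j * relu (dot (W j) x)

/-- `g(z) = -ℓ'(z) = 1/(1+e^z)` for the logistic loss `ℓ(z) = log(1+e^{-z})`. -/
def lossG (z : ℝ) : ℝ := 1 / (1 + Real.exp z)

/-- One step of gradient descent on the first-layer weights:
`w_j^{(t+1)} = w_j^{(t)} + (α a_j / n) ∑ i g_i^{(t)} φ'(⟨w_j^{(t)}, x_i⟩) y_i x_i`. -/
def gdStep {n p m : ℕ} (α : ℝ) (X : Fin n → Fin p → ℝ) (Y : Fin n → ℝ)
    (a : Fin m → ℝ) (W : Fin m → Fin p → ℝ) : Fin m → Fin p → ℝ :=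
  fun j k => W j k + (α * a j / n) *
    ∑ i, lossG (Y i * nnet a W (X i)) * reluD (dot (W j) (X i)) * (Y i * X i k)

/-- The gradient descent iterates `W^{(t)}`. -/
def gdIter {n p m : ℕ} (α : ℝ) (X : Fin n → Fin p → ℝ) (Y : Fin n → ℝ)
    (a : Fin m → ℝ) (W0 : Fin m → Fin p → ℝ) : ℕ → Fin m → Fin p → ℝ
  | 0 => W0
  | t + 1 => gdStep α X Y a (gdIter α X Y a W0 t)

/-- Frobenius norm of the first-layer weight matrix. -/
def frob {p m : ℕ} (W : Fin m → Fin p → ℝ) : ℝ :=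
  Real.sqrt (∑ j, ∑ k, (W j k) ^ 2)

/-! ### The XOR cluster structure -/

/-- The four cluster centers `+μ₁, -μ₁, +μ₂, -μ₂`, indexed by `Fin 4`. -/
def ctr {p : ℕ} (μ1 μ2 : Fin p → ℝ) : Fin 4 → Fin p → ℝ := ![μ1, -μ1, μ2, -μ2]

/-- The clean label of each cluster. -/
def cl : Fin 4 → ℝ := ![1, 1, -1, -1]

/-- The index of the opposite center: `ν ↦ -ν`. -/
def negIdx : Fin 4 → Fin 4 := ![1, 0, 3, 2]

/-- The set of the four cluster centers. -/
def centers {p : ℕ} (μ1 μ2 : Fin p → ℝ) : Set (Fin p → ℝ) := {μ1, -μ1, μ2, -μ2}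

/-- Structural hypotheses on the means: orthogonality and equal norms. -/
def MeanHyp {p : ℕ} (μ1 μ2 : Fin p → ℝ) : Prop :=
  dot μ1 μ2 = 0 ∧ nrm μ1 = nrm μ2

/-- Basic constraints on the parameters: `η ∈ [0, 1/2)`, `α > 0`, `ω_init ≥ 0`. -/
def ParamHyp (η α winit : ℝ) : Prop :=
  0 ≤ η ∧ η < 1 / 2 ∧ 0 < α ∧ 0 ≤ winit

/-- Assumptions (A1)–(A6), where `μn = ‖μ‖`:
(A1) `‖μ‖² ≥ C n^{0.51} √p`, (A2) `p ≥ C n² ‖μ‖²`, (A3) `η ≤ 1/C`,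
(A4) `α ≤ 1/(C n p)`, (A5) `ω_init n m^{3/2} p ≤ α ‖μ‖²`, (A6) `m ≥ C n^{0.02}`. -/
def Assum (C : ℝ) (n p m : ℕ) (μn η α winit : ℝ) : Prop :=
  C * (n : ℝ) ^ (0.51 : ℝ) * Real.sqrt p ≤ μn ^ 2 ∧
  C * (n : ℝ) ^ 2 * μn ^ 2 ≤ (p : ℝ) ∧
  η ≤ 1 / C ∧
  α ≤ 1 / (C * n * p) ∧
  winit * n * (m : ℝ) ^ ((3 : ℝ) / 2) * (p : ℝ) ≤ α * μn ^ 2 ∧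
  C * (n : ℝ) ^ (0.02 : ℝ) ≤ (m : ℝ)

/-! ### The probability model

The randomness is generated from canonical sources: for each training sample a
uniform cluster index in `Fin 4`, standard Gaussian noise in `ℝ^p`, and a standard
Gaussian variable whose CDF-value is used as the (uniform) label-flip coin; for
the network, uniform signs in `Bool` for the second layer, and standard Gaussian
first-layer noise which is scaled by `ω_init`. -/

abbrev Vec (p : ℕ) := Fin p → ℝ

/-- Sample space: cluster indices, data noise, flip coins, second-layer signs,
and unscaled first-layer initialization. -/
abbrev Sample (n p m : ℕ) :=
  (Fin n → Fin 4) × (Fin n → Vec p) × (Fin n → ℝ) × (Fin m → Bool) × (Fin m → Vec p)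

/-- The standard Gaussian measure on `ℝ^p`. -/
def stdG (p : ℕ) : Measure (Vec p) := Measure.pi fun _ => gaussianReal 0 1

/-- The joint law of all randomness. -/
def sampleMeasure (n p m : ℕ) : Measure (Sample n p m) :=
  ((PMF.uniformOfFintype (Fin n → Fin 4)).toMeasure).prod
    ((Measure.pi fun _ : Fin n => stdG p).prod
      ((Measure.pi fun _ : Fin n => gaussianReal 0 1).prod
        (((PMF.uniformOfFintype (Fin m → Bool)).toMeasure).prod
          (Measure.pi fun _ : Fin m => stdG p))))

/-- The training inputs `x_i = x̄_i + ξ_i`. -/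
def trainX {n p m : ℕ} (μ1 μ2 : Vec p) (ω : Sample n p m) : Fin n → Vec p :=
  fun i => ctr μ1 μ2 (ω.1 i) + ω.2.1 i

/-- The (possibly flipped) training labels: the label is flipped iff the uniform
variable `Φ(g_i)` is `< η`, which happens with probability `η`. -/
def trainY {n p m : ℕ} (η : ℝ) (ω : Sample n p m) : Fin n → ℝ :=
  fun i => (if cdf (gaussianReal 0 1) (ω.2.2.1 i) < η then -1 else 1) * cl (ω.1 i)

/-- The second-layer weights `a_j ∈ {± 1/√m}`. -/
def secondLayer {n p m : ℕ} (ω : Sample n p m) : Fin m → ℝ :=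
  fun j => if ω.2.2.2.1 j then 1 / Real.sqrt m else -(1 / Real.sqrt m)

/-- The initialization `w_j^{(0)} ∼ N(0, ω_init² I_p)`. -/
def initW {n p m : ℕ} (winit : ℝ) (ω : Sample n p m) : Fin m → Vec p :=
  fun j k => winit * ω.2.2.2.2 j k

/-- The trained first-layer weights `W^{(t)}`. -/
def netW {n p m : ℕ} (μ1 μ2 : Vec p) (η α winit : ℝ) (ω : Sample n p m) (t : ℕ) :
    Fin m → Vec p :=
  gdIter α (trainX μ1 μ2 ω) (trainY η ω) (secondLayer ω) (initW winit ω) t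

/-- The clean test distribution `P_clean` on `ℝ^p × ℝ`. -/
def Pclean (p : ℕ) (μ1 μ2 : Vec p) : Measure (Vec p × ℝ) :=
  Measure.map (fun w : Fin 4 × Vec p => (ctr μ1 μ2 w.1 + w.2, cl w.1))
    (((PMF.uniformOfFintype (Fin 4)).toMeasure).prod (stdG p))

/-- The Gaussian measure `N(ν, I_p)` at center index `q`. -/
def gaussAt {p : ℕ} (μ1 μ2 : Vec p) (q : Fin 4) : Measure (Vec p) :=
  Measure.map (fun z => ctr μ1 μ2 q + z) (stdG p)

/-- The clean test error of the classifier `sgn ∘ f(·; a, W)`. -/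
def testErr {p m : ℕ} (μ1 μ2 : Vec p) (a : Fin m → ℝ) (W : Fin m → Vec p) : ℝ :=
  ((Pclean p μ1 μ2) {xy : Vec p × ℝ | xy.2 ≠ Real.sign (nnet a W xy.1)}).toReal

/-! ### Counts, alignment, and the "good run" conditions -/

/-- `c_ν`: number of clean samples in the cluster with center index `q`. -/
def cntC {n : ℕ} (u : Fin n → Fin 4) (Y : Fin n → ℝ) (q : Fin 4) : ℕ :=
  (Finset.univ.filter fun i => u i = q ∧ Y i = cl q).card

/-- `n_ν`: number of noisy samples in the cluster with center index `q`. -/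
def cntN {n : ℕ} (u : Fin n → Fin 4) (Y : Fin n → ℝ) (q : Fin 4) : ℕ :=
  (Finset.univ.filter fun i => u i = q ∧ Y i ≠ cl q).card

/-- The clean samples of cluster `q` activating neuron `j` for weights `W`. -/
def actC {n p m : ℕ} (u : Fin n → Fin 4) (X : Fin n → Vec p) (Y : Fin n → ℝ)
    (W : Fin m → Vec p) (q : Fin 4) (j : Fin m) : Finset (Fin n) :=
  Finset.univ.filter fun i => u i = q ∧ Y i = cl q ∧ 0 < dot (W j) (X i)

/-- The noisy samples of cluster `q` activating neuron `j` for weights `W`. -/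
def actN {n p m : ℕ} (u : Fin n → Fin 4) (X : Fin n → Vec p) (Y : Fin n → ℝ)
    (W : Fin m → Vec p) (q : Fin 4) (j : Fin m) : Finset (Fin n) :=
  Finset.univ.filter fun i => u i = q ∧ Y i ≠ cl q ∧ 0 < dot (W j) (X i)

/-- `d_{ν,j} = |C_{ν,j}| - |N_{ν,j}|`. -/
def dval {n p m : ℕ} (u : Fin n → Fin 4) (X : Fin n → Vec p) (Y : Fin n → ℝ)
    (W : Fin m → Vec p) (q : Fin 4) (j : Fin m) : ℤ :=
  ((actC u X Y W q j).card : ℤ) - ((actN u X Y W q j).card : ℤ)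

/-- `D_{ν,j} = d_{ν,j} - d_{-ν,j}`. -/
def Dval {n p m : ℕ} (u : Fin n → Fin 4) (X : Fin n → Vec p) (Y : Fin n → ℝ)
    (W : Fin m → Vec p) (q : Fin 4) (j : Fin m) : ℤ :=
  dval u X Y W q j - dval u X Y W (negIdx q) j

/-- Neuron `j` is `(ν, κ)`-aligned (w.r.t. the initialization `W0`). -/
def Aligned {n p m : ℕ} (u : Fin n → Fin 4) (X : Fin n → Vec p) (Y : Fin n → ℝ)
    (W0 : Fin m → Vec p) (κ : ℝ) (q : Fin 4) (j : Fin m) : Prop :=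
  (n : ℝ) ^ ((1 : ℝ) / 2 - κ) < (Dval u X Y W0 q j : ℝ) ∧
  max ((dval u X Y W0 (negIdx q) j : ℝ)) ((dval u X Y W0 q j : ℝ)) <
    min (cntC u Y q : ℝ) (cntC u Y (negIdx q) : ℝ) -
      2 * ((cntN u Y q : ℝ) + (cntN u Y (negIdx q) : ℝ)) - Real.sqrt n

/-- Condition (B1). -/
def CondB1 {n p : ℕ} (μ1 μ2 : Vec p) (u : Fin n → Fin 4) (X : Fin n → Vec p) : Prop :=
  ∀ k : Fin n,
    (∀ ν ∈ centers μ1 μ2, dot (X k - ctr μ1 μ2 (u k)) ν ≤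
        10 * Real.sqrt (Real.log n) * nrm μ1) ∧
    |nrm (X k) ^ 2 - p - nrm μ1 ^ 2| ≤ 10 * Real.sqrt (p * Real.log n)

/-- Condition (B2). -/
def CondB2 {n p : ℕ} (μ1 μ2 : Vec p) (u : Fin n → Fin 4) (X : Fin n → Vec p) : Prop :=
  ∀ i k : Fin n, i ≠ k →
    |dot (X i) (X k) - dot (ctr μ1 μ2 (u i)) (ctr μ1 μ2 (u k))| ≤
      10 * Real.sqrt (p * Real.log n)

/-- Condition (B3). -/
def CondB3 {n : ℕ} (ε η : ℝ) (u : Fin n → Fin 4) (Y : Fin n → ℝ) : Prop :=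
  ∀ q : Fin 4,
    |(cntC u Y q : ℝ) + (cntN u Y q : ℝ) - n / 4| ≤ Real.sqrt (ε * n * Real.log n) ∧
    |(cntN u Y q : ℝ) - η * ((cntC u Y q : ℝ) + (cntN u Y q : ℝ))| ≤
      Real.sqrt (ε * η * n * Real.log n)

/-- Condition (B4). -/
def CondB4 {n : ℕ} (ε η : ℝ) (u : Fin n → Fin 4) (Y : Fin n → ℝ) : Prop :=
  ∀ q : Fin 4,
    (n : ℝ) ^ ((1 : ℝ) / 2 - ε) ≤
      |(cntC u Y q : ℝ) + (cntN u Y q : ℝ) -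
        (cntC u Y (negIdx q) : ℝ) - (cntN u Y (negIdx q) : ℝ)| ∧
    η * (n : ℝ) ^ ((1 : ℝ) / 2 - ε) ≤ |(cntN u Y q : ℝ) - (cntN u Y (negIdx q) : ℝ)|

/-- Conditions (B1)–(B4) together. -/
def CondB {n p : ℕ} (ε : ℝ) (μ1 μ2 : Vec p) (η : ℝ) (u : Fin n → Fin 4)
    (X : Fin n → Vec p) (Y : Fin n → ℝ) : Prop :=
  CondB1 μ1 μ2 u X ∧ CondB2 μ1 μ2 u X ∧ CondB3 ε η u Y ∧ CondB4 ε η u Y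

/-- Condition (C1): `‖W^{(0)}‖_F² ≤ (3/2) ω_init² m p`. -/
def CondC1 {p m : ℕ} (winit : ℝ) (W0 : Fin m → Vec p) : Prop :=
  ∑ j, ∑ k, (W0 j k) ^ 2 ≤ 3 / 2 * winit ^ 2 * m * p

/-- The positive neurons `J_Pos`. -/
def posNeurons {m : ℕ} (a : Fin m → ℝ) : Finset (Fin m) :=
  Finset.univ.filter fun j => 0 < a j

/-- The negative neurons `J_Neg`. -/
def negNeurons {m : ℕ} (a : Fin m → ℝ) : Finset (Fin m) :=
  Finset.univ.filter fun j => a j < 0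

/-- Condition (C2): `|J_Pos| ≥ m/3` and `|J_Neg| ≥ m/3`. -/
def CondC2 {m : ℕ} (a : Fin m → ℝ) : Prop :=
  (m : ℝ) / 3 ≤ (posNeurons a).card ∧ (m : ℝ) / 3 ≤ (negNeurons a).card

/-- Condition (D1). -/
def CondD1 {n p m : ℕ} (u : Fin n → Fin 4) (X : Fin n → Vec p)
    (a : Fin m → ℝ) (W0 : Fin m → Vec p) : Prop :=
  ∀ i : Fin n,
    (m : ℝ) / 7 ≤ ((posNeurons a).filter fun j => 0 < dot (W0 j) (X i)).card ∧
    (m : ℝ) / 7 ≤ ((negNeurons a).filter fun j => 0 < dot (W0 j) (X i)).card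

/-- Condition (D2). -/
def CondD2 {n p m : ℕ} (ε : ℝ) (u : Fin n → Fin 4) (X : Fin n → Vec p) (Y : Fin n → ℝ)
    (a : Fin m → ℝ) (W0 : Fin m → Vec p) : Prop :=
  ∀ q : Fin 4, ∀ κ : ℝ, 0 ≤ κ → κ < 1 / 2 →
    (m : ℝ) * (n : ℝ) ^ (-(10 * ε)) ≤
      ((posNeurons a).filter fun j => Aligned u X Y W0 κ q j).card ∧
    (m : ℝ) * (n : ℝ) ^ (-(10 * ε)) ≤
      ((negNeurons a).filter fun j => Aligned u X Y W0 κ q j).card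

/-- Condition (D3). -/
def CondD3 {n p m : ℕ} (ε : ℝ) (u : Fin n → Fin 4) (X : Fin n → Vec p) (Y : Fin n → ℝ)
    (a : Fin m → ℝ) (W0 : Fin m → Vec p) : Prop :=
  ∀ q : Fin 4,
    (1 - 10 * (n : ℝ) ^ (-(20 * ε))) * (posNeurons a).card ≤
      ((posNeurons a).filter fun j =>
        Aligned u X Y W0 (20 * ε) q j ∨ Aligned u X Y W0 (20 * ε) (negIdx q) j).card ∧
    (1 - 10 * (n : ℝ) ^ (-(20 * ε))) * (negNeurons a).card ≤
      ((negNeurons a).filter fun j =>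
        Aligned u X Y W0 (20 * ε) q j ∨ Aligned u X Y W0 (20 * ε) (negIdx q) j).card

/-- Condition (D4). -/
def CondD4 {n p m : ℕ} (u : Fin n → Fin 4) (X : Fin n → Vec p) (Y : Fin n → ℝ)
    (a : Fin m → ℝ) (W0 : Fin m → Vec p) : Prop :=
  ∀ q : Fin 4, ∀ κ : ℝ, 0 ≤ κ → κ < 1 / 2 →
    ((n : ℝ) / 10) * ((posNeurons a).filter fun j => Aligned u X Y W0 κ q j).card ≤
      (∑ j ∈ (posNeurons a).filter (fun j => Aligned u X Y W0 κ q j),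
        ((cntC u Y q : ℝ) - (cntN u Y q : ℝ) - (dval u X Y W0 (negIdx q) j : ℝ))) ∧
    ((n : ℝ) / 10) * ((negNeurons a).filter fun j => Aligned u X Y W0 κ q j).card ≤
      (∑ j ∈ (negNeurons a).filter (fun j => Aligned u X Y W0 κ q j),
        ((cntC u Y q : ℝ) - (cntN u Y q : ℝ) - (dval u X Y W0 (negIdx q) j : ℝ)))

/-- Conditions (D1)–(D4) together. -/
def CondD {n p m : ℕ} (ε : ℝ) (u : Fin n → Fin 4) (X : Fin n → Vec p) (Y : Fin n → ℝ)
    (a : Fin m → ℝ) (W0 : Fin m → Vec p) : Prop :=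
  CondD1 u X a W0 ∧ CondD2 ε u X Y a W0 ∧ CondD3 ε u X Y a W0 ∧ CondD4 u X Y a W0

/-- A "good run": conditions (B1)–(B4), (C1)–(C2) and (D1)–(D4) all hold. -/
def GoodRun {n p m : ℕ} (ε : ℝ) (μ1 μ2 : Vec p) (η winit : ℝ) (u : Fin n → Fin 4)
    (X : Fin n → Vec p) (Y : Fin n → ℝ) (a : Fin m → ℝ) (W0 : Fin m → Vec p) : Prop :=
  CondB ε μ1 μ2 η u X Y ∧ CondC1 winit W0 ∧ CondC2 a ∧ CondD ε u X Y a W0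

/-- Labels take values in `{±1}`. -/
def ModelData {n : ℕ} (Y : Fin n → ℝ) : Prop := ∀ i, Y i = 1 ∨ Y i = -1

/-- Second-layer weights take values in `{±1/√m}`. -/
def ModelLayer {m : ℕ} (a : Fin m → ℝ) : Prop :=
  ∀ j, a j = 1 / Real.sqrt m ∨ a j = -(1 / Real.sqrt m)

end XOR

namespace XOR

attribute [local instance] Classical.propDecidable

/-! Each gradient step moves the network output at a training input `x` by at most
`(α / n) ∑ₗ |⟨xₗ, x⟩|`: the loss and ReLU derivatives lie in `[0, 1]`, ReLU is 1-Lipschitz and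
`∑ⱼ aⱼ² = 1`. On a good run the Gram row sums are at most `(21/20) p`, because `p` dominates
`n ‖μ‖²` and the noise terms, so over `t ≤ 1 / (√n p α)` steps the output drifts by
`O(n^{-3/2})`. The initial output is at most `‖W⁽⁰⁾‖_F ‖x‖`, which (A5) makes negligible, and
`g = σ(-·)` is `1/4`-Lipschitz with `g 0 = 1/2`. -/

lemma dot_self_nonneg {p : ℕ} (x : Vec p) : 0 ≤ dot x x :=
  Finset.sum_nonneg fun _ _ => mul_self_nonneg _

lemma nrm_sq {p : ℕ} (x : Vec p) : nrm x ^ 2 = dot x x :=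
  Real.sq_sqrt (dot_self_nonneg x)

lemma dot_comm {p : ℕ} (x y : Vec p) : dot x y = dot y x :=
  Finset.sum_congr rfl fun _ _ => mul_comm _ _

lemma dot_neg_left {p : ℕ} (x y : Vec p) : dot (-x) y = -dot x y := by
  simp [dot]

lemma dot_neg_right {p : ℕ} (x y : Vec p) : dot x (-y) = -dot x y := by
  simp [dot]

lemma abs_dot_le {p : ℕ} (x y : Vec p) : |dot x y| ≤ nrm x * nrm y := by
  have h := Real.sum_mul_le_sqrt_mul_sqrt Finset.univ (fun k => |x k|) (fun k => |y k|)
  simp only [sq_abs, ← abs_mul] at h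
  simpa only [nrm, dot, sq] using (Finset.abs_sum_le_sum_abs _ _).trans h

lemma lossG_eq_sigmoid_neg (z : ℝ) : lossG z = Real.sigmoid (-z) := by
  rw [lossG, Real.sigmoid_def, neg_neg, one_div]

lemma lipschitzWith_sigmoid : LipschitzWith (1 / 4) Real.sigmoid := by
  refine lipschitzWith_of_nnnorm_deriv_le differentiable_sigmoid fun x => ?_
  have h0 := Real.sigmoid_pos x
  have h1 := Real.sigmoid_lt_one x
  rw [← NNReal.coe_le_coe, coe_nnnorm, Real.deriv_sigmoid, Real.norm_eq_abs,
    abs_of_nonneg (by nlinarith)]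
  push_cast
  nlinarith [sq_nonneg (Real.sigmoid x - 1 / 2)]

lemma abs_lossG_sub_half_le (z : ℝ) : |lossG z - 1 / 2| ≤ |z| / 4 := by
  have h := lipschitzWith_sigmoid.dist_le_mul (-z) 0
  rw [Real.dist_eq, Real.dist_eq, Real.sigmoid_zero, sub_zero, abs_neg] at h
  rw [lossG_eq_sigmoid_neg]
  push_cast at h
  linarith

section Network

variable {n p m : ℕ} (a : Fin m → ℝ)

lemma abs_nnet_sub_le (W V : Fin m → Vec p) (x : Vec p) :
    |nnet a W x - nnet a V x| ≤ ∑ j, |a j| * |dot (W j) x - dot (V j) x| := by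
  rw [nnet, nnet, ← Finset.sum_sub_distrib]
  refine (Finset.abs_sum_le_sum_abs _ _).trans (Finset.sum_le_sum fun j _ => ?_)
  rw [← mul_sub, abs_mul]
  exact mul_le_mul_of_nonneg_left (abs_max_sub_max_le_abs _ _ _) (abs_nonneg _)

lemma abs_nnet_le (W : Fin m → Vec p) (x : Vec p) :
    |nnet a W x| ≤ √(∑ j, a j ^ 2) * frob W * nrm x := by
  have hW : ∀ j, nrm (W j) ^ 2 = ∑ k, W j k ^ 2 := fun j => by
    simp only [nrm_sq, dot, ← sq]
  calc |nnet a W x| = |nnet a W x - nnet a 0 x| := by simp [nnet, dot, relu]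
    _ ≤ ∑ j, |a j| * |dot (W j) x| := by simpa [dot] using abs_nnet_sub_le a W 0 x
    _ ≤ ∑ j, |a j| * nrm (W j) * nrm x := Finset.sum_le_sum fun j _ => by
        rw [mul_assoc]; exact mul_le_mul_of_nonneg_left (abs_dot_le _ _) (abs_nonneg _)
    _ = (∑ j, |a j| * nrm (W j)) * nrm x := by rw [Finset.sum_mul]
    _ ≤ √(∑ j, a j ^ 2) * frob W * nrm x := by
        refine mul_le_mul_of_nonneg_right ?_ (Real.sqrt_nonneg _)
        simpa only [sq_abs, hW, frob] using Real.sum_mul_le_sqrt_mul_sqrt Finset.univ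
          (fun j => |a j|) fun j => nrm (W j)

lemma dot_gdStep_sub (α : ℝ) (X : Fin n → Vec p) (Y : Fin n → ℝ) (W : Fin m → Vec p)
    (j : Fin m) (x : Vec p) :
    dot (gdStep α X Y a W j) x - dot (W j) x = α * a j / n *
      ∑ l, lossG (Y l * nnet a W (X l)) * reluD (dot (W j) (X l)) * Y l * dot (X l) x := by
  simp only [dot, gdStep, add_mul, Finset.sum_add_distrib, add_sub_cancel_left,
    Finset.mul_sum, Finset.sum_mul]
  rw [Finset.sum_comm]
  exact Finset.sum_congr rfl fun l _ => Finset.sum_congr rfl fun k _ => by ring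

lemma abs_dot_gdStep_sub_le {α : ℝ} (hα : 0 ≤ α) (X : Fin n → Vec p) {Y : Fin n → ℝ}
    (hY : ∀ l, |Y l| ≤ 1) (W : Fin m → Vec p) (j : Fin m) (x : Vec p) :
    |dot (gdStep α X Y a W j) x - dot (W j) x| ≤ α * |a j| / n * ∑ l, |dot (X l) x| := by
  have hg : ∀ z, |lossG z| ≤ 1 := fun z => by
    rw [lossG_eq_sigmoid_neg, abs_of_pos (Real.sigmoid_pos _)]; exact Real.sigmoid_le_one _
  have hr : ∀ z, |reluD z| ≤ 1 := fun z => by unfold reluD; split_ifs <;> norm_num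
  rw [dot_gdStep_sub, abs_mul, abs_div, abs_mul, abs_of_nonneg hα, Nat.abs_cast]
  refine mul_le_mul_of_nonneg_left ((Finset.abs_sum_le_sum_abs _ _).trans
    (Finset.sum_le_sum fun l _ => ?_)) (by positivity)
  simp only [abs_mul]
  have hcoef := mul_le_one₀ (mul_le_one₀ (hg (Y l * nnet a W (X l))) (abs_nonneg _)
    (hr (dot (W j) (X l)))) (abs_nonneg _) (hY l)
  exact mul_le_of_le_one_left (abs_nonneg _) hcoef

lemma abs_nnet_gdStep_sub_le {α : ℝ} (hα : 0 ≤ α) (X : Fin n → Vec p) {Y : Fin n → ℝ}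
    (hY : ∀ l, |Y l| ≤ 1) (W : Fin m → Vec p) (x : Vec p) :
    |nnet a (gdStep α X Y a W) x - nnet a W x| ≤
      (∑ j, a j ^ 2) * (α / n * ∑ l, |dot (X l) x|) := by
  refine (abs_nnet_sub_le a _ W x).trans ?_
  rw [Finset.sum_mul]
  refine Finset.sum_le_sum fun j _ => ?_
  calc |a j| * |dot (gdStep α X Y a W j) x - dot (W j) x|
      ≤ |a j| * (α * |a j| / n * ∑ l, |dot (X l) x|) :=
        mul_le_mul_of_nonneg_left (abs_dot_gdStep_sub_le a hα X hY W j x) (abs_nonneg _)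
    _ = a j ^ 2 * (α / n * ∑ l, |dot (X l) x|) := by rw [← sq_abs (a j)]; ring

lemma abs_nnet_gdIter_le {α : ℝ} (hα : 0 ≤ α) (X : Fin n → Vec p) {Y : Fin n → ℝ}
    (hY : ∀ l, |Y l| ≤ 1) (W0 : Fin m → Vec p) (t : ℕ) (x : Vec p) :
    |nnet a (gdIter α X Y a W0 t) x| ≤ √(∑ j, a j ^ 2) * frob W0 * nrm x +
      t * ((∑ j, a j ^ 2) * (α / n * ∑ l, |dot (X l) x|)) := by
  have hdrift := dist_le_range_sum_of_dist_le (f := fun s => nnet a (gdIter α X Y a W0 s) x)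
    (d := fun _ => (∑ j, a j ^ 2) * (α / n * ∑ l, |dot (X l) x|)) t fun _ => by
      rw [dist_comm, Real.dist_eq]
      exact abs_nnet_gdStep_sub_le a hα X hY _ x
  rw [Finset.sum_const, Finset.card_range, nsmul_eq_mul, Real.dist_eq] at hdrift
  have h0 := abs_nnet_le a W0 x
  simp only [gdIter] at hdrift h0
  have := abs_sub_abs_le_abs_sub (nnet a (gdIter α X Y a W0 t) x) (nnet a W0 x)
  rw [abs_sub_comm] at hdrift
  linarith

end Network

lemma ModelData.abs_eq_one {n : ℕ} {Y : Fin n → ℝ} (hY : ModelData Y) (l : Fin n) :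
    |Y l| = 1 := by
  rcases hY l with h | h <;> simp [h]

lemma ModelLayer.sum_sq {m : ℕ} {a : Fin m → ℝ} (ha : ModelLayer a) (hm : m ≠ 0) :
    ∑ j, a j ^ 2 = 1 := by
  have hsq : ∀ j, a j ^ 2 = 1 / m := fun j => by
    rcases ha j with h | h <;> rw [h] <;> simp [Real.sq_sqrt (Nat.cast_nonneg m)]
  simp [hsq, hm]

lemma abs_dot_ctr_le {p : ℕ} {μ1 μ2 : Vec p} (h : MeanHyp μ1 μ2) (q q' : Fin 4) :
    |dot (ctr μ1 μ2 q) (ctr μ1 μ2 q')| ≤ nrm μ1 ^ 2 := by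
  obtain ⟨h12, hnrm⟩ := h
  have h11 : dot μ1 μ1 = nrm μ1 ^ 2 := (nrm_sq μ1).symm
  have h22 : dot μ2 μ2 = nrm μ1 ^ 2 := by rw [← nrm_sq, hnrm]
  have h21 : dot μ2 μ1 = 0 := by rw [dot_comm, h12]
  fin_cases q <;> fin_cases q' <;>
    simp [ctr, dot_neg_left, dot_neg_right, h11, h22, h12, h21, sq_nonneg]

lemma sum_le_add_card_mul {ι : Type*} [Fintype ι] [DecidableEq ι] {f : ι → ℝ}
    {K B : ℝ} (i : ι) (hi : f i ≤ K) (hB : ∀ l, l ≠ i → f l ≤ B) (hB0 : 0 ≤ B) :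
    ∑ l, f l ≤ K + Fintype.card ι * B := by
  rw [← Finset.add_sum_erase _ _ (Finset.mem_univ i)]
  have hrest : ∑ l ∈ Finset.univ.erase i, f l ≤ (Finset.univ.erase i).card * B := by
    rw [← nsmul_eq_mul]
    exact Finset.sum_le_card_nsmul _ _ B fun l hl => hB l (Finset.ne_of_mem_erase hl)
  have hcard : ((Finset.univ.erase i).card : ℝ) ≤ Fintype.card ι := by
    exact_mod_cast (Finset.card_erase_le).trans_eq Finset.card_univ
  nlinarith

section Sample

variable {n p : ℕ} {μ1 μ2 : Vec p} {u : Fin n → Fin 4} {X : Fin n → Vec p}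

lemma CondB1.dot_self_le (h : CondB1 μ1 μ2 u X) (k : Fin n) :
    dot (X k) (X k) ≤ p + nrm μ1 ^ 2 + 10 * √(p * Real.log n) := by
  have := (abs_le.mp (h k).2).2
  rw [nrm_sq] at this
  linarith

lemma CondB2.abs_dot_le (h : CondB2 μ1 μ2 u X) (hM : MeanHyp μ1 μ2) {l k : Fin n}
    (hlk : l ≠ k) : |dot (X l) (X k)| ≤ nrm μ1 ^ 2 + 10 * √(p * Real.log n) := by
  have := abs_sub_abs_le_abs_sub (dot (X l) (X k)) (dot (ctr μ1 μ2 (u l)) (ctr μ1 μ2 (u k)))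
  linarith [h l k hlk, abs_dot_ctr_le hM (u l) (u k)]

lemma sum_abs_dot_le (hM : MeanHyp μ1 μ2) (hB1 : CondB1 μ1 μ2 u X) (hB2 : CondB2 μ1 μ2 u X)
    (hlog : 10 * √(p * Real.log n) ≤ nrm μ1 ^ 2 / 10) (hμ : 100 * n * nrm μ1 ^ 2 ≤ p)
    (i : Fin n) : ∑ l, |dot (X l) (X i)| ≤ 21 / 20 * p := by
  have hsum := sum_le_add_card_mul (f := fun l => |dot (X l) (X i)|) i
    ((abs_of_nonneg (dot_self_nonneg _)).trans_le (hB1.dot_self_le i))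
    (fun l hl => hB2.abs_dot_le hM hl) (by positivity)
  rw [Fintype.card_fin] at hsum
  have hn : (1 : ℝ) ≤ n := Nat.one_le_cast.mpr i.pos
  have hnL := mul_le_mul_of_nonneg_left hlog (by linarith : (0 : ℝ) ≤ n)
  nlinarith [sq_nonneg (nrm μ1)]

end Sample

lemma CondC1.frob_mul_nrm_le {p m : ℕ} {winit : ℝ} {W0 : Fin m → Vec p} (h : CondC1 winit W0)
    (hω : 0 ≤ winit) {x : Vec p} (hx : dot x x ≤ 21 / 20 * p) :
    frob W0 * nrm x ≤ 2 * winit * √m * p := by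
  have hF : frob W0 ^ 2 ≤ 3 / 2 * winit ^ 2 * m * p := by
    rw [frob, Real.sq_sqrt (by positivity)]; exact h
  have hx' : nrm x ^ 2 ≤ 21 / 20 * p := by rw [nrm_sq]; exact hx
  refine le_of_pow_le_pow_left₀ two_ne_zero (by positivity) ?_
  calc (frob W0 * nrm x) ^ 2 = frob W0 ^ 2 * nrm x ^ 2 := mul_pow _ _ _
    _ ≤ (3 / 2 * winit ^ 2 * m * p) * (21 / 20 * p) :=
        mul_le_mul hF hx' (sq_nonneg _) (by positivity)
    _ ≤ (2 * winit * √m * p) ^ 2 := by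
        rw [mul_pow, mul_pow, mul_pow, Real.sq_sqrt (Nat.cast_nonneg m)]
        nlinarith [mul_nonneg (mul_nonneg (sq_nonneg winit) (Nat.cast_nonneg (α := ℝ) m))
          (sq_nonneg (p : ℝ))]

lemma rpow_three_halves {x : ℝ} (hx : 0 ≤ x) : x ^ (3 / 2 : ℝ) = x * √x := by
  rw [show (3 / 2 : ℝ) = 1 + 1 / 2 by norm_num, Real.rpow_add' hx (by norm_num), Real.rpow_one,
    Real.sqrt_eq_rpow]

namespace Assum

variable {C : ℝ} {n p m : ℕ} {μn η α winit : ℝ}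

lemma m_ne_zero (hA : Assum C n p m μn η α winit) (hC : 0 < C) (hn : 1 ≤ (n : ℝ)) : m ≠ 0 := by
  have : 1 ≤ (n : ℝ) ^ (0.02 : ℝ) := Real.one_le_rpow hn (by norm_num)
  have : (0 : ℝ) < m := by nlinarith [hA.2.2.2.2.2]
  exact (Nat.cast_pos.mp this).ne'

lemma p_pos (hA : Assum C n p m μn η α winit) (hα : 0 < α) : 0 < p := by
  refine Nat.pos_of_ne_zero fun hp => ?_
  have := hA.2.2.2.1
  simp [hp] at this
  linarith

lemma log_term_le (hA : Assum C n p m μn η α winit) (hC : 100 ≤ C) (hn : 1 ≤ (n : ℝ)) :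
    10 * √(p * Real.log n) ≤ μn ^ 2 / 10 := by
  have hlog : Real.log n ≤ n := (Real.log_le_sub_one_of_pos (by linarith)).trans (by linarith)
  have hsqrt : √(n : ℝ) ≤ (n : ℝ) ^ (0.51 : ℝ) := by
    rw [Real.sqrt_eq_rpow]; exact Real.rpow_le_rpow_of_exponent_le hn (by norm_num)
  calc 10 * √(p * Real.log n) ≤ 10 * (√p * √n) := by
        rw [← Real.sqrt_mul (Nat.cast_nonneg p)]; gcongr
    _ ≤ C * (n : ℝ) ^ (0.51 : ℝ) * √p / 10 := by
        nlinarith [Real.sqrt_nonneg (p : ℝ), mul_le_mul_of_nonneg_left hsqrt (Real.sqrt_nonneg p),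
          mul_nonneg (Real.rpow_nonneg (by linarith : (0 : ℝ) ≤ n) (0.51 : ℝ))
            (Real.sqrt_nonneg (p : ℝ))]
    _ ≤ μn ^ 2 / 10 := by linarith [hA.1]

lemma hundred_mul_le (hA : Assum C n p m μn η α winit) (hC : 100 ≤ C) (hn : 1 ≤ (n : ℝ)) :
    100 * n * μn ^ 2 ≤ p := by
  have : 100 * (n : ℝ) ≤ C * n ^ 2 := by nlinarith
  nlinarith [hA.2.1, sq_nonneg μn]

lemma init_scale_le (hA : Assum C n p m μn η α winit) (hC : 100 ≤ C) (hn : 1 ≤ (n : ℝ))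
    (hα : 0 < α) (hω : 0 ≤ winit) : 2 * winit * √m * p ≤ 1 / (n : ℝ) ^ (3 / 2 : ℝ) := by
  have hm : (1 : ℝ) ≤ m :=
    Nat.one_le_cast.mpr (Nat.one_le_iff_ne_zero.mpr (hA.m_ne_zero (by linarith) hn))
  have hp : (0 : ℝ) < p := Nat.cast_pos.mpr (hA.p_pos hα)
  obtain ⟨-, hA2, -, hA4, hA5, -⟩ := hA
  have hsqrt_m : √m ≤ n * (m : ℝ) ^ (3 / 2 : ℝ) := by
    rw [Real.sqrt_eq_rpow]
    nlinarith [Real.rpow_le_rpow_of_exponent_le hm (show (1 / 2 : ℝ) ≤ 3 / 2 by norm_num),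
      Real.rpow_nonneg (by linarith : (0 : ℝ) ≤ m) (3 / 2 : ℝ)]
  have hαp : α * (C * n * p) ≤ 1 := (le_div_iff₀ (by positivity)).mp hA4
  have hN : (n : ℝ) ^ (3 / 2 : ℝ) ≤ n ^ 3 := by
    have hs : √(n : ℝ) ≤ n := Real.sqrt_le_self_iff.mpr (Or.inr hn)
    rw [rpow_three_halves (by linarith)]
    nlinarith
  have hscale : winit * √m * p ≤ α * μn ^ 2 := by
    nlinarith [mul_le_mul_of_nonneg_left hsqrt_m (mul_nonneg hω hp.le)]
  have hμ : α * μn ^ 2 * (C ^ 2 * n ^ 3) ≤ 1 := by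
    nlinarith [mul_le_mul_of_nonneg_left hA2 (by positivity : (0 : ℝ) ≤ α * (C * n))]
  have hN0 : 0 < (n : ℝ) ^ (3 / 2 : ℝ) := by positivity
  rw [le_div_iff₀ hN0]
  calc 2 * winit * √m * p * (n : ℝ) ^ (3 / 2 : ℝ) ≤ 2 * (α * μn ^ 2) * n ^ 3 := by
        have := mul_le_mul hscale hN hN0.le (by positivity)
        linarith
    _ ≤ 1 := by nlinarith [sq_nonneg μn]

end Assum

lemma mul_div_le_one_div_rpow_of_le {t n p α : ℝ} (hn : 0 < n) (hpα : 0 < p * α)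
    (ht : t ≤ 1 / (√n * p * α) - 2) : t * (α * p / n) ≤ 1 / n ^ (3 / 2 : ℝ) := by
  have hsqrt : 0 < √n := Real.sqrt_pos.mpr hn
  have ht' : t * (√n * p * α) ≤ 1 := by
    rw [← le_div_iff₀ (by rw [mul_assoc]; positivity)]; linarith
  rw [rpow_three_halves hn.le, le_div_iff₀ (by positivity)]
  calc t * (α * p / n) * (n * √n) = t * (√n * p * α) := by field_simp
    _ ≤ 1 := ht'

lemma abs_nnet_gdIter_le_of_goodRun {C : ℝ} {n p m : ℕ} {μ1 μ2 : Vec p} {η α winit : ℝ}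
    {u : Fin n → Fin 4} {X : Fin n → Vec p} {Y : Fin n → ℝ} {a : Fin m → ℝ}
    {W0 : Fin m → Vec p} (hC : 100 ≤ C) (hM : MeanHyp μ1 μ2) (hα : 0 < α) (hω : 0 ≤ winit)
    (hA : Assum C n p m (nrm μ1) η α winit) (hY : ModelData Y) (ha : ModelLayer a)
    (hB1 : CondB1 μ1 μ2 u X) (hB2 : CondB2 μ1 μ2 u X) (hC1 : CondC1 winit W0) {t : ℕ}
    (ht : (t : ℝ) ≤ 1 / (√n * p * α) - 2) (i : Fin n) :
    |nnet a (gdIter α X Y a W0 t) (X i)| ≤ 3 / (n : ℝ) ^ (3 / 2 : ℝ) := by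
  have hn : (1 : ℝ) ≤ n := Nat.one_le_cast.mpr i.pos
  have hp : (0 : ℝ) < p := Nat.cast_pos.mpr (hA.p_pos hα)
  have hrow := sum_abs_dot_le hM hB1 hB2 (hA.log_term_le hC hn) (hA.hundred_mul_le hC hn) i
  have hdiag : dot (X i) (X i) ≤ 21 / 20 * p := (le_abs_self _).trans <|
    (Finset.single_le_sum (fun l _ => abs_nonneg (dot (X l) (X i))) (Finset.mem_univ i)).trans hrow
  have hinit := (hC1.frob_mul_nrm_le hω hdiag).trans (hA.init_scale_le hC hn hα hω)
  have hdrift := mul_div_le_one_div_rpow_of_le (by linarith) (by positivity) ht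
  have hf := abs_nnet_gdIter_le a hα.le X (fun l => (hY.abs_eq_one l).le) W0 t (X i)
  rw [ha.sum_sq (hA.m_ne_zero (by linarith) hn), Real.sqrt_one, one_mul, one_mul] at hf
  calc |nnet a (gdIter α X Y a W0 t) (X i)|
      ≤ frob W0 * nrm (X i) + t * (α / n * ∑ l, |dot (X l) (X i)|) := hf
    _ ≤ 1 / (n : ℝ) ^ (3 / 2 : ℝ) + t * (α / n * (21 / 20 * p)) := by gcongr
    _ = 1 / (n : ℝ) ^ (3 / 2 : ℝ) + 21 / 20 * (t * (α * p / n)) := by ring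
    _ ≤ 3 / (n : ℝ) ^ (3 / 2 : ℝ) := by
        have : 0 ≤ 1 / (n : ℝ) ^ (3 / 2 : ℝ) := by positivity
        rw [show 3 / (n : ℝ) ^ (3 / 2 : ℝ) = 3 * (1 / (n : ℝ) ^ (3 / 2 : ℝ)) by ring]
        linarith

/-- Lemma on the sigmoid derivatives: under a good run, for
every `0 ≤ t ≤ 1/(√n p α) − 2`, `max_i |g_i^{(t)} − 1/2| ≤ 2/n^{3/2}`. -/
theorem sigmoid_derivative_bound :
    ∀ ε : ℝ, 0 < ε → ε < 1 / 4000 →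
      ∃ (C₀ : ℝ) (N₀ : ℕ),
        ∀ C : ℝ, C₀ ≤ C →
        ∀ (n p m : ℕ) (μ1 μ2 : Vec p) (η α winit : ℝ)
          (u : Fin n → Fin 4) (X : Fin n → Vec p) (Y : Fin n → ℝ)
          (a : Fin m → ℝ) (W0 : Fin m → Vec p),
          N₀ ≤ n →
          MeanHyp μ1 μ2 →
          ParamHyp η α winit →
          Assum C n p m (nrm μ1) η α winit →
          ModelData Y →
          ModelLayer a →
          GoodRun ε μ1 μ2 η winit u X Y a W0 →
          ∀ t : ℕ, (t : ℝ) ≤ 1 / (Real.sqrt n * p * α) - 2 →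
            ∀ i : Fin n,
              |lossG (Y i * nnet a (gdIter α X Y a W0 t) (X i)) - 1 / 2| ≤
                2 / (n : ℝ) ^ ((3 : ℝ) / 2) := by
  intro ε _ _
  refine ⟨100, 0, fun C hC n p m μ1 μ2 η α winit u X Y a W0 _ hM hP hA hY ha hG t ht i => ?_⟩
  obtain ⟨-, -, hα, hω⟩ := hP
  obtain ⟨⟨hB1, hB2, -⟩, hC1, -⟩ := hG
  have hf := abs_nnet_gdIter_le_of_goodRun hC hM hα hω hA hY ha hB1 hB2 hC1 ht i
  have hN : 0 < (n : ℝ) ^ ((3 : ℝ) / 2) := by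
    have : (0 : ℝ) < n := Nat.cast_pos.mpr i.pos
    positivity
  calc |lossG (Y i * nnet a (gdIter α X Y a W0 t) (X i)) - 1 / 2|
      ≤ |Y i * nnet a (gdIter α X Y a W0 t) (X i)| / 4 := abs_lossG_sub_half_le _
    _ = |nnet a (gdIter α X Y a W0 t) (X i)| / 4 := by rw [abs_mul, hY.abs_eq_one, one_mul]
    _ ≤ 3 / (n : ℝ) ^ ((3 : ℝ) / 2) / 4 := by gcongr
    _ ≤ 2 / (n : ℝ) ^ ((3 : ℝ) / 2) := by
        rw [div_div, div_le_div_iff₀ (by positivity) hN]; nlinarith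

end XOR
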